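/- arXiv:2011.03936 — 2 statements merged into one kernel-verified Lean document; each statement's English description precedes it below -/
import Mathlib

section
/- Let V be a complex vector space of complex dimension n, viewed as a real vector space with complex structure J (multiplication by i), and let Q be a real symmetric bilinear form on V. If Q(v,v) + Q(Jv,Jv) > 0 for every nonzero v ∈ V, then the index of Q is at most n. -/
/-! If `W` is negative definite for `Q`, then `W ∩ iW = 0`: a nonzero `v ∈ W` with `iv ∈ W` would
give `Q(v,v) + Q(iv,iv) < 0`. Since multiplication by `i` is an `ℝ`-linear automorphism, `W` and
`iW` are disjoint subspaces of the same dimension in the `2n`-dimensional real space `V`. -/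

open Module

theorem Submodule.two_mul_finrank_le_of_disjoint_map {K V : Type*} [DivisionRing K]
    [AddCommGroup V] [Module K V] [FiniteDimensional K V] (e : V ≃ₗ[K] V) {W : Submodule K V}
    (h : Disjoint W (W.map (e : V →ₗ[K] V))) : 2 * finrank K W ≤ finrank K V := by
  have := Submodule.finrank_add_finrank_le_of_disjoint h
  rw [e.finrank_map_eq] at this
  omega

theorem Submodule.disjoint_map_I_smul_of_neg_definite {V : Type*} [AddCommGroup V] [Module ℂ V]
    (Q : LinearMap.BilinForm ℝ V)
    (hpos : ∀ v : V, v ≠ 0 → 0 < Q v v + Q (Complex.I • v) (Complex.I • v))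
    {W : Submodule ℝ V} (hW : ∀ w ∈ W, w ≠ 0 → Q w w < 0) :
    Disjoint W
      (W.map (DistribMulAction.toLinearEquiv ℝ V (Units.mk0 Complex.I Complex.I_ne_zero) :
        V →ₗ[ℝ] V)) := by
  rw [Submodule.disjoint_def]
  rintro _ hIv ⟨v, hv, rfl⟩
  change Complex.I • v ∈ W at hIv
  change Complex.I • v = 0
  by_contra hIv0
  have hv0 : v ≠ 0 := right_ne_zero_of_smul hIv0
  linarith [hpos v hv0, hW v hv hv0, hW _ hIv hIv0]

theorem stmt1_general (n : ℕ) (V : Type*) [AddCommGroup V] [Module ℂ V]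
    [FiniteDimensional ℂ V] (hdim : Module.finrank ℂ V = n)
    (Q : LinearMap.BilinForm ℝ V)
    (hpos : ∀ v : V, v ≠ 0 → 0 < Q v v + Q (Complex.I • v) (Complex.I • v))
    (W : Submodule ℝ V) (hW : ∀ w ∈ W, w ≠ 0 → Q w w < 0) :
    Module.finrank ℝ W ≤ n := by
  have : FiniteDimensional ℝ V := Module.Finite.trans ℂ V
  have hVdim : finrank ℝ V = 2 * n := by
    rw [← finrank_mul_finrank ℝ ℂ V, Complex.finrank_real_complex, hdim]
  have := Submodule.two_mul_finrank_le_of_disjoint_map _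
    (Submodule.disjoint_map_I_smul_of_neg_definite Q hpos hW)
  omega

/-- If a real symmetric bilinear form `Q` on a complex vector space of complex
dimension `n` satisfies `Q(v,v) + Q(iv,iv) > 0` for all `v ≠ 0`, then its index
is at most `n`: every subspace on which `Q` is negative definite has real
dimension at most `n`. -/
theorem stmt1 (n : ℕ) (V : Type*) [AddCommGroup V] [Module ℂ V]
    [FiniteDimensional ℂ V] (hdim : Module.finrank ℂ V = n)
    (Q : LinearMap.BilinForm ℝ V) (hQ : Q.IsSymm)
    (hpos : ∀ v : V, v ≠ 0 → 0 < Q v v + Q (Complex.I • v) (Complex.I • v))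
    (W : Submodule ℝ V) (hW : ∀ w ∈ W, w ≠ 0 → Q w w < 0) :
    Module.finrank ℝ W ≤ n :=
  stmt1_general n V hdim Q hpos W hW
end

section
/- Let A be a real 2n×2n symmetric matrix and J the standard complex structure matrix on ℝ^{2n} (J² = −I). If the 'complexified (1,1)-part' of A, namely the matrix ¼(A + JᵀAJ) viewed as a Hermitian form on ℂ^n, is positive definite, then A has at most n negative eigenvalues (counted with multiplicity). -/
/-!
Let `W` be the span of the eigenvectors of `A` with negative eigenvalue, so that `A` is negative
definite on `W` and `dim W` is the number of negative eigenvalues. If `dim W > n`, then `W` and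
`J⁻¹ W`, two subspaces of `ℝ^{2n}` of dimension `dim W`, meet in some `v ≠ 0`. Both `v` and `J v`
lie in `W`, so `vᵀ A v + (J v)ᵀ A (J v) = vᵀ (A + Jᵀ A J) v` is negative, contradicting the
positivity of the `(1,1)`-part.
-/

open Matrix

theorem Submodule.exists_mem_ne_zero_apply_mem_of_finrank_lt {K V : Type*} [DivisionRing K]
    [AddCommGroup V] [Module K V] [FiniteDimensional K V] (W : Submodule K V) (e : V ≃ₗ[K] V)
    (h : Module.finrank K V < 2 * Module.finrank K W) : ∃ v ∈ W, v ≠ 0 ∧ e v ∈ W := by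
  have hcomap : Module.finrank K (W.comap e.toLinearMap) = Module.finrank K W := by
    rw [Submodule.comap_equiv_eq_map_symm, LinearEquiv.finrank_map_eq]
  have : ¬Disjoint W (W.comap e.toLinearMap) := fun hdisj => by
    have := Submodule.finrank_add_finrank_le_of_disjoint hdisj
    omega
  simpa [Submodule.disjoint_def, and_comm] using this

theorem Matrix.dotProduct_transpose_mul_mul_mulVec {m n R : Type*} [Fintype m] [Fintype n]
    [CommSemiring R] (A : Matrix m m R) (J : Matrix m n R) (v : n → R) :
    v ⬝ᵥ (Jᵀ * A * J) *ᵥ v = (J *ᵥ v) ⬝ᵥ A *ᵥ (J *ᵥ v) := by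
  rw [← mulVec_mulVec, ← mulVec_mulVec, dotProduct_mulVec, vecMul_transpose]

theorem Matrix.fromBlocks_zero_neg_one_one_zero_mul_self (n R : Type*) [Fintype n]
    [DecidableEq n] [Ring R] :
    (fromBlocks 0 (-1) 1 0 : Matrix (n ⊕ n) (n ⊕ n) R) * fromBlocks 0 (-1) 1 0 = -1 := by
  rw [fromBlocks_multiply, ← fromBlocks_one, fromBlocks_neg]
  simp

theorem Orthonormal.sum_smul_dotProduct_sum_smul {ι κ : Type*} [Fintype ι]
    {v : κ → EuclideanSpace ℝ ι} (hv : Orthonormal ℝ v) (s : Finset κ) (c d : κ → ℝ) :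
    (∑ i ∈ s, c i • ⇑(v i)) ⬝ᵥ (∑ i ∈ s, d i • ⇑(v i)) = ∑ i ∈ s, c i * d i := by
  have := hv.inner_sum c d s
  rw [EuclideanSpace.inner_eq_star_dotProduct] at this
  simpa [dotProduct_comm] using this

namespace Matrix.IsHermitian

section RCLike

variable {𝕜 ι : Type*} [RCLike 𝕜] [Fintype ι] [DecidableEq ι] {A : Matrix ι ι 𝕜}

def eigenvectorSpan (hA : A.IsHermitian) (s : Finset ι) : Submodule 𝕜 (ι → 𝕜) :=
  Submodule.span 𝕜 ((fun i => ⇑(hA.eigenvectorBasis i)) '' s)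

theorem finrank_eigenvectorSpan (hA : A.IsHermitian) (s : Finset ι) :
    Module.finrank 𝕜 (hA.eigenvectorSpan s) = s.card := by
  have hli : LinearIndependent 𝕜 fun i => ⇑(hA.eigenvectorBasis i) :=
    (hA.eigenvectorBasis.toBasis.map (WithLp.linearEquiv 2 𝕜 (ι → 𝕜))).linearIndependent
  rw [eigenvectorSpan, Set.image_eq_range]
  exact (finrank_span_eq_card (hli.comp _ Subtype.val_injective)).trans (by simp)

end RCLike

variable {ι : Type*} [Fintype ι] [DecidableEq ι] {A : Matrix ι ι ℝ} (hA : A.IsHermitian)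

theorem mulVec_sum_smul_eigenvectorBasis (s : Finset ι) (c : ι → ℝ) :
    A *ᵥ (∑ i ∈ s, c i • ⇑(hA.eigenvectorBasis i)) =
      ∑ i ∈ s, (hA.eigenvalues i * c i) • ⇑(hA.eigenvectorBasis i) := by
  simp [mulVec_sum, mulVec_smul, hA.mulVec_eigenvectorBasis, smul_smul, mul_comm]

theorem dotProduct_mulVec_neg_of_mem_eigenvectorSpan {s : Finset ι}
    (hs : ∀ i ∈ s, hA.eigenvalues i < 0) {x : ι → ℝ} (hx : x ∈ hA.eigenvectorSpan s)
    (hx0 : x ≠ 0) : x ⬝ᵥ A *ᵥ x < 0 := by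
  obtain ⟨c, rfl⟩ := (Submodule.mem_span_image_finset_iff_exists_fun' ℝ).1 hx
  obtain ⟨j, hjs, hcj⟩ : ∃ j ∈ s, c j ≠ 0 := by
    by_contra! hc
    exact hx0 (Finset.sum_eq_zero fun i hi => by simp [hc i hi])
  rw [hA.mulVec_sum_smul_eigenvectorBasis,
    hA.eigenvectorBasis.orthonormal.sum_smul_dotProduct_sum_smul]
  refine Finset.sum_neg' (fun i hi => ?_) ⟨j, hjs, ?_⟩
  · nlinarith [hs i hi, mul_self_nonneg (c i)]
  · nlinarith [hs j hjs, mul_self_pos.2 hcj]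

end Matrix.IsHermitian

/-- If the `(1,1)`-part `¼(A + JᵀAJ)` of a real symmetric `2n×2n` matrix `A`
is positive definite (as a quadratic form, equivalently as a Hermitian form on
`ℂⁿ`), then `A` has at most `n` negative eigenvalues. Here `J` is the standard
complex structure on `ℝ^{2n} = ℝⁿ ⊕ ℝⁿ`. -/
theorem stmt18 (n : ℕ) (A : Matrix (Fin n ⊕ Fin n) (Fin n ⊕ Fin n) ℝ)
    (hA : A.IsHermitian)
    (J : Matrix (Fin n ⊕ Fin n) (Fin n ⊕ Fin n) ℝ)
    (hJ : J = Matrix.fromBlocks 0 (-1) 1 0)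
    (hpos : ∀ v : Fin n ⊕ Fin n → ℝ, v ≠ 0 →
      0 < (1 / 4 : ℝ) * (v ⬝ᵥ (A + Jᵀ * A * J).mulVec v)) :
    (Finset.univ.filter fun i => hA.eigenvalues i < 0).card ≤ n := by
  set N := Finset.univ.filter fun i => hA.eigenvalues i < 0
  have hJJ : J * J = -1 := hJ ▸ fromBlocks_zero_neg_one_one_zero_mul_self (Fin n) ℝ
  let e := toLin'OfInv (M := -J) (M' := J) (by rw [neg_mul, hJJ, neg_neg])
    (by rw [mul_neg, hJJ, neg_neg])
  by_contra! hcard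
  obtain ⟨v, hv, hv0, hJv⟩ := (hA.eigenvectorSpan N).exists_mem_ne_zero_apply_mem_of_finrank_lt e
    (by rw [Module.finrank_fintype_fun_eq_card, Fintype.card_sum, Fintype.card_fin,
      hA.finrank_eigenvectorSpan]; omega)
  have hneg : ∀ x ∈ hA.eigenvectorSpan N, x ≠ 0 → x ⬝ᵥ A *ᵥ x < 0 := fun x =>
    hA.dotProduct_mulVec_neg_of_mem_eigenvectorSpan (by simp [N])
  have hquad := hpos v hv0
  rw [add_mulVec, dotProduct_add, dotProduct_transpose_mul_mul_mulVec] at hquad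
  linarith [hneg v hv hv0, hneg (J *ᵥ v) hJv (e.map_ne_zero_iff.2 hv0)]
end
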